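/- arXiv:0908.3630 — 3 statements merged into one kernel-verified Lean document; each statement's English description precedes it below -/
import Mathlib

section
/- Let P be a Markov kernel on a measurable space E satisfying, for some α > 1 and a symmetric measurable function Φ: E×E → [0,∞), the Harnack inequality (Pf)^α(x) ≤ exp(Φ(x,y)) · P f^α(y) for all bounded nonnegative measurable f and all x, y ∈ E. If μ is an invariant probability measure for P and there is x₀ ∈ E and a measurable set B ∋ x₀ with μ(B) = 0 and ∫ exp(−Φ(x₀,y)) μ(dy) > 0, then P(x₀, B) = 0. -/
/-! Invariance gives `∫ P(y, B) μ(dy) = μ B = 0`, so `P(y, B) = 0` for some `y`. The Harnack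
inequality for `f = 1_B`, for which `f ^ α = f`, then reads `P(x₀, B) ^ α ≤ e^{Φ(x₀, y)} P(y, B) = 0`. -/

open MeasureTheory ProbabilityTheory

lemma Set.indicator_one_rpow {E : Type*} (B : Set E) {α : ℝ} (hα : α ≠ 0) (z : E) :
    B.indicator (1 : E → ℝ) z ^ α = B.indicator 1 z := by
  by_cases hz : z ∈ B <;> simp [hz, Real.zero_rpow hα]

lemma ProbabilityTheory.Kernel.exists_apply_eq_zero_of_lintegral_eq
    {E F : Type*} [MeasurableSpace E] [MeasurableSpace F] (κ : Kernel E F)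
    (μ : Measure E) [NeZero μ] (ν : Measure F) {B : Set F} (hB : MeasurableSet B)
    (hinv : ∫⁻ x, κ x B ∂μ = ν B) (hνB : ν B = 0) : ∃ y, κ y B = 0 :=
  have hae : ∀ᵐ y ∂μ, κ y B = 0 :=
    (lintegral_eq_zero_iff (κ.measurable_coe hB)).mp (hinv.trans hνB)
  hae.exists

lemma measure_eq_zero_of_indicator_harnack {E : Type*} [MeasurableSpace E]
    {ν ν' : Measure E} [IsFiniteMeasure ν] [IsFiniteMeasure ν'] {α C : ℝ} (hα : 0 < α)
    {B : Set E} (hB : MeasurableSet B)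
    (hHarnack : (∫ z, B.indicator 1 z ∂ν) ^ α ≤ C * ∫ z, B.indicator 1 z ^ α ∂ν')
    (hν'B : ν' B = 0) : ν B = 0 := by
  simp only [B.indicator_one_rpow hα.ne', integral_indicator_one hB, measureReal_def, hν'B,
    ENNReal.toReal_zero, mul_zero] at hHarnack
  have hrpow : (ν B).toReal ^ α = 0 :=
    le_antisymm hHarnack (Real.rpow_nonneg ENNReal.toReal_nonneg α)
  rw [Real.rpow_eq_zero ENNReal.toReal_nonneg hα.ne'] at hrpow
  exact (ENNReal.toReal_eq_zero_iff _).mp hrpow |>.resolve_right (measure_ne_top ν B)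

theorem harnack_full_support_general {E : Type*} [MeasurableSpace E]
    (P : Kernel E E) [IsMarkovKernel P] (μ : Measure E) [IsProbabilityMeasure μ]
    (α : ℝ) (hα : 1 < α) (Φ : E → E → ℝ)
    (hHarnack : ∀ f : E → ℝ, Measurable f → (∀ z, 0 ≤ f z) →
      (∃ M, ∀ z, f z ≤ M) → ∀ x y,
      (∫ z, f z ∂(P x)) ^ α ≤ Real.exp (Φ x y) * ∫ z, (f z) ^ α ∂(P y))
    (hinv : ∀ s : Set E, MeasurableSet s → ∫⁻ x, P x s ∂μ = μ s)
    (x₀ : E) (B : Set E) (hB : MeasurableSet B) (hμB : μ B = 0) :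
    P x₀ B = 0 := by
  obtain ⟨y, hy⟩ := P.exists_apply_eq_zero_of_lintegral_eq μ μ hB (hinv B hB) hμB
  have hindicator_le_one : ∀ z, B.indicator (1 : E → ℝ) z ≤ 1 :=
    Set.indicator_le_self' fun _ _ ↦ zero_le_one
  exact measure_eq_zero_of_indicator_harnack (by linarith) hB
    (hHarnack _ (measurable_one.indicator hB) (Set.indicator_nonneg fun _ _ ↦ zero_le_one)
      ⟨1, hindicator_le_one⟩ x₀ y) hy

theorem harnack_full_support {E : Type*} [MeasurableSpace E]
    (P : Kernel E E) [IsMarkovKernel P] (μ : Measure E) [IsProbabilityMeasure μ]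
    (α : ℝ) (hα : 1 < α) (Φ : E → E → ℝ)
    (hΦmeas : Measurable (Function.uncurry Φ)) (hΦnn : ∀ x y, 0 ≤ Φ x y)
    (hΦsymm : ∀ x y, Φ x y = Φ y x)
    (hHarnack : ∀ f : E → ℝ, Measurable f → (∀ z, 0 ≤ f z) →
      (∃ M, ∀ z, f z ≤ M) → ∀ x y,
      (∫ z, f z ∂(P x)) ^ α ≤ Real.exp (Φ x y) * ∫ z, (f z) ^ α ∂(P y))
    (hinv : ∀ s : Set E, MeasurableSet s → ∫⁻ x, P x s ∂μ = μ s)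
    (x₀ : E) (B : Set E) (hB : MeasurableSet B) (hx₀ : x₀ ∈ B) (hμB : μ B = 0)
    (hpos : 0 < ∫ y, Real.exp (-Φ x₀ y) ∂μ) :
    P x₀ B = 0 :=
  harnack_full_support_general P μ α hα Φ hHarnack hinv x₀ B hB hμB
end

section
/- Let q > 2, C, γ, θ > 0 and let g solve g'(t) = C − γ θ^{−2(q−1)/q} g(t) (log g(t))^{2(q−1)/q} with g(0) ≥ e > 1. Then there is a constant C' > 0 (depending only on C, γ, θ, q) such that g(t) ≤ exp(C'(1 + t^{−q/(q−2)})) for all t > 0, uniformly in the initial value g(0). -/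
open Set Filter Real Topology

set_option maxHeartbeats 1000000

theorem ode_ultrabound (q C γ θ : ℝ) (hq : 2 < q) (hC : 0 < C) (hγ : 0 < γ)
    (hθ : 0 < θ) :
    ∃ C' > 0, ∀ g : ℝ → ℝ,
      (∀ t ≥ (0:ℝ), HasDerivAt g
        (C - γ * θ ^ (-(2 * (q - 1) / q)) * g t *
          (Real.log (g t)) ^ (2 * (q - 1) / q)) t) →
      Real.exp 1 ≤ g 0 →
      ∀ t > (0:ℝ), g t ≤ Real.exp (C' * (1 + t ^ (-(q / (q - 2))))) := by
  have hq0 : (0:ℝ) < q := by linarith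
  have hq2 : (0:ℝ) < q - 2 := by linarith
  set α : ℝ := 2 * (q - 1) / q with hαdef
  set β : ℝ := q / (q - 2) with hβdef
  have hα1 : 1 < α := by
    rw [hαdef, lt_div_iff₀ hq0]; linarith
  have hα0 : 0 < α := by linarith
  have hβ0 : 0 < β := div_pos hq0 hq2
  have hβα : β * α = β + 1 := by
    rw [hαdef, hβdef]; field_simp; ring
  have hαm1 : (0:ℝ) < α - 1 := by linarith
  -- the damping constant
  set c : ℝ := γ * θ ^ (-α) with hcdef
  have hc0 : 0 < c := mul_pos hγ (Real.rpow_pos_of_pos hθ _)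
  -- constants of the barrier
  set A : ℝ := max 1 ((2 * C / c) ^ α⁻¹) with hAdef
  have hA1 : 1 ≤ A := le_max_left _ _
  have hA0 : 0 < A := lt_of_lt_of_le one_pos hA1
  have hAα : 2 * C / c ≤ A ^ α := by
    calc 2 * C / c = ((2 * C / c) ^ α⁻¹) ^ α :=
          (Real.rpow_inv_rpow (by positivity) (ne_of_gt hα0)).symm
      _ ≤ A ^ α := Real.rpow_le_rpow (by positivity) (le_max_right _ _) hα0.le
  set K : ℝ := 1 + max 1 ((2 * β / c) ^ (α - 1)⁻¹) with hKdef
  have hK1 : 1 ≤ K := by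
    rw [hKdef]
    nlinarith [le_max_left 1 ((2 * β / c) ^ (α - 1)⁻¹)]
  have hK0 : 0 < K := lt_of_lt_of_le one_pos hK1
  have hKα : 2 * β / c < K ^ (α - 1) := by
    have h1 : 2 * β / c = ((2 * β / c) ^ (α - 1)⁻¹) ^ (α - 1) :=
      (Real.rpow_inv_rpow (by positivity) (ne_of_gt hαm1)).symm
    have h2 : (2 * β / c) ^ (α - 1)⁻¹ < K := by
      have := le_max_right 1 ((2 * β / c) ^ (α - 1)⁻¹)
      rw [hKdef]; linarith
    calc 2 * β / c = ((2 * β / c) ^ (α - 1)⁻¹) ^ (α - 1) := h1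
      _ < K ^ (α - 1) := Real.rpow_lt_rpow (by positivity) h2 hαm1
  refine ⟨A + K, by positivity, ?_⟩
  clear_value α β c A K
  intro g hg _ t₀ ht₀
  -- the barrier function
  set Bf : ℝ → ℝ := fun t => Real.exp (A + K * t ^ (-β)) with hBfdef
  set Bd : ℝ → ℝ := fun t => Real.exp (A + K * t ^ (-β)) * (K * (-β * t ^ (-β - 1))) with hBddef
  have hBderiv : ∀ x : ℝ, 0 < x → HasDerivAt Bf (Bd x) x := by
    intro x hx
    have h1 : HasDerivAt (fun t : ℝ => t ^ (-β)) (-β * x ^ (-β - 1)) x :=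
      Real.hasDerivAt_rpow_const (Or.inl (ne_of_gt hx))
    have h2 : HasDerivAt (fun t : ℝ => A + K * t ^ (-β)) (K * (-β * x ^ (-β - 1))) x :=
      ((h1.const_mul K).const_add A)
    exact h2.exp
  -- continuity of g on [0, t₀]
  have hgcont : ContinuousOn g (Icc 0 t₀) := fun x hx =>
    (hg x hx.1).continuousAt.continuousWithinAt
  -- bound of g on [0, t₀]
  obtain ⟨M, hM⟩ := isCompact_Icc.exists_bound_of_continuousOn hgcont
  -- the barrier blows up near 0, so it dominates g somewhere near 0
  have hBtop : Tendsto Bf (𝓝[>] (0:ℝ)) atTop := by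
    have h1 : Tendsto (fun t : ℝ => t ^ (-β)) (𝓝[>] (0:ℝ)) atTop := by
      have h2 : Tendsto (fun t : ℝ => (t⁻¹) ^ β) (𝓝[>] (0:ℝ)) atTop :=
        (tendsto_rpow_atTop hβ0).comp tendsto_inv_nhdsGT_zero
      refine h2.congr' ?_
      filter_upwards [self_mem_nhdsWithin] with t ht
      rw [Real.inv_rpow (le_of_lt ht), ← Real.rpow_neg (le_of_lt ht)]
    have h3 : Tendsto (fun t : ℝ => A + K * t ^ (-β)) (𝓝[>] (0:ℝ)) atTop :=
      tendsto_atTop_add_const_left _ A (h1.const_mul_atTop hK0)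
    exact Real.tendsto_exp_atTop.comp h3
  have hev : ∀ᶠ t in 𝓝[>] (0:ℝ), M ≤ Bf t ∧ t ∈ Ioc 0 t₀ := by
    filter_upwards [hBtop.eventually_ge_atTop M,
      Ioc_mem_nhdsGT ht₀] with t h1 h2 using ⟨h1, h2⟩
  obtain ⟨t₁, ht₁M, ht₁mem⟩ := hev.exists
  -- the set of contact candidates
  set T : Set ℝ := {t ∈ Icc t₁ t₀ | g t ≤ Bf t} with hTdef
  have hT1 : t₁ ∈ T := by
    refine ⟨⟨le_refl _, ht₁mem.2⟩, ?_⟩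
    have := hM t₁ ⟨ht₁mem.1.le, ht₁mem.2⟩
    calc g t₁ ≤ |g t₁| := le_abs_self _
      _ ≤ M := by simpa [Real.norm_eq_abs] using this
      _ ≤ Bf t₁ := ht₁M
  have hT1' : g t₁ ≤ M := le_trans (le_abs_self _) (by
    simpa [Real.norm_eq_abs] using hM t₁ ⟨ht₁mem.1.le, ht₁mem.2⟩)
  have hTne : T.Nonempty := ⟨t₁, hT1⟩
  have hTbdd : BddAbove T := ⟨t₀, fun x hx => hx.1.2⟩
  set s : ℝ := sSup T with hsdef
  have hs1 : t₁ ≤ s := le_csSup hTbdd hT1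
  have hst₀ : s ≤ t₀ := csSup_le hTne (fun x hx => hx.1.2)
  have hs0 : 0 < s := lt_of_lt_of_le ht₁mem.1 hs1
  -- Bf is continuous on [t₁, t₀]
  have hBcont : ContinuousOn Bf (Icc t₁ t₀) := fun x hx =>
    ((hBderiv x (lt_of_lt_of_le ht₁mem.1 hx.1)).continuousAt).continuousWithinAt
  -- T is closed, so s ∈ T
  have hTclosed : IsClosed T := by
    have hgc : ContinuousOn (fun t => g t - Bf t) (Icc t₁ t₀) :=
      (hgcont.mono (fun x hx => ⟨le_trans ht₁mem.1.le hx.1, hx.2⟩)).sub hBcont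
    have : T = Icc t₁ t₀ ∩ (fun t => g t - Bf t) ⁻¹' Iic 0 := by
      ext x; simp [hTdef, sub_nonpos, and_comm]
    rw [this]
    exact hgc.preimage_isClosed_of_isClosed isClosed_Icc isClosed_Iic
  have hsT : s ∈ T := hTclosed.closure_subset (csSup_mem_closure hTne hTbdd)
  -- comparison on [s, t₀]
  have key : ∀ x ∈ Icc s t₀, g x ≤ Bf x := by
    refine image_le_of_deriv_right_lt_deriv_boundary'
      (f := g) (f' := fun t => C - c * g t * (Real.log (g t)) ^ α)
      (B := Bf) (B' := Bd) ?_ ?_ hsT.2 (hBcont.mono ?_) ?_ ?_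
    · exact hgcont.mono (fun x hx => ⟨le_trans hs0.le hx.1, hx.2⟩)
    · intro x hx
      exact (hg x (le_trans hs0.le hx.1)).hasDerivWithinAt
    · exact fun x hx => ⟨le_trans hs1 hx.1, hx.2⟩
    · intro x hx
      exact (hBderiv x (lt_of_lt_of_le hs0 hx.1)).hasDerivWithinAt
    · -- the contact estimate
      intro x hx hcontact
      have hx0 : 0 < x := lt_of_lt_of_le hs0 hx.1
      set y : ℝ := x ^ (-β) with hydef
      have hy0 : 0 < y := Real.rpow_pos_of_pos hx0 _
      set w : ℝ := x ^ (-β - 1) with hwdef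
      have hw0 : 0 < w := Real.rpow_pos_of_pos hx0 _
      have hyw : y ^ α = w := by
        rw [hydef, hwdef, ← Real.rpow_mul hx0.le]
        congr 1
        linarith [hβα]
      set v : ℝ := A + K * y with hvdef
      have hKy0 : 0 ≤ K * y := mul_nonneg hK0.le hy0.le
      have hv1 : 1 ≤ v := by rw [hvdef]; linarith
      have hv0 : 0 < v := lt_of_lt_of_le one_pos hv1
      have hgx : g x = Real.exp v := hcontact
      have hlog : Real.log (g x) = v := by rw [hgx, Real.log_exp]
      set E : ℝ := Real.exp v with hEdef
      have hE1 : 1 ≤ E := by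
        rw [hEdef, ← Real.exp_zero]
        exact Real.exp_le_exp.mpr (by linarith)
      have hE0 : 0 < E := lt_of_lt_of_le one_pos hE1
      -- goal: C - c * E * v ^ α < E * (K * (-β * w))
      have h1 : A ^ α ≤ v ^ α :=
        Real.rpow_le_rpow hA0.le (by rw [hvdef]; linarith) hα0.le
      have h2 : (K * y) ^ α ≤ v ^ α :=
        Real.rpow_le_rpow hKy0 (by rw [hvdef]; linarith) hα0.le
      have hKy : (K * y) ^ α = K ^ α * w := by
        rw [Real.mul_rpow hK0.le hy0.le, hyw]
      have hKα' : K ^ α = K ^ (α - 1) * K := by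
        rw [← Real.rpow_add_one (ne_of_gt hK0)]
        norm_num
      have hCpart : C ≤ c / 2 * A ^ α := by
        calc C = c / 2 * (2 * C / c) := by field_simp
          _ ≤ c / 2 * A ^ α := mul_le_mul_of_nonneg_left hAα (by linarith)
      have hKpart : β * K * w < c / 2 * ((K * y) ^ α) := by
        rw [hKy, hKα']
        have h5 : β < c / 2 * K ^ (α - 1) := by
          calc β = c / 2 * (2 * β / c) := by field_simp
            _ < c / 2 * K ^ (α - 1) := mul_lt_mul_of_pos_left hKα (by linarith)
        have h6 := mul_lt_mul_of_pos_right h5 (mul_pos hK0 hw0)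
        linarith [h6]
      have hBdx : Bd x = E * (K * (-β * w)) := by
        rw [hBddef]
      clear_value y w v E
      have hmain : C + β * K * w * E < c * E * v ^ α := by
        have p1 : C ≤ c / 2 * A ^ α * E := by
          calc C ≤ c / 2 * A ^ α := hCpart
            _ = c / 2 * A ^ α * 1 := by ring
            _ ≤ c / 2 * A ^ α * E := by
                apply mul_le_mul_of_nonneg_left hE1 (by linarith)
        have p2 : β * K * w * E < c / 2 * ((K * y) ^ α) * E :=
          mul_lt_mul_of_pos_right hKpart hE0
        have p3 : c / 2 * A ^ α * E ≤ c / 2 * v ^ α * E :=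
          mul_le_mul_of_nonneg_right
            (mul_le_mul_of_nonneg_left h1 (by linarith : (0:ℝ) ≤ c / 2)) hE0.le
        have p4 : c / 2 * ((K * y) ^ α) * E ≤ c / 2 * v ^ α * E :=
          mul_le_mul_of_nonneg_right
            (mul_le_mul_of_nonneg_left h2 (by linarith : (0:ℝ) ≤ c / 2)) hE0.le
        linarith
      show C - c * g x * (Real.log (g x)) ^ α < Bd x
      rw [hlog, hgx, hBdx]
      linarith [hmain]
  -- conclude
  have hfin : g t₀ ≤ Bf t₀ := key t₀ ⟨hst₀, le_refl _⟩
  refine le_trans hfin ?_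
  rw [hBfdef]
  simp only
  apply Real.exp_le_exp.mpr
  have hy0 : (0:ℝ) ≤ t₀ ^ (-β) := (Real.rpow_pos_of_pos ht₀ _).le
  have := mul_nonneg hA0.le hy0
  linarith [mul_nonneg hA0.le hy0]
end

section
/- Let ω ∈ ℝ, and define ξ_t = e^{−ωt} / ∫₀^T e^{−2ωs} ds for t ∈ [0,T]. If h : [0,T] → [0,∞) satisfies h(0) = h₀ > 0 and h'(t) ≤ 2ω h(t) − 2 ξ_t h₀^{1/2} h(t)^{1/2} whenever h(t) > 0, then h(T) = 0. -/
/-!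
Put `g t = h t * exp (-2ωt)` (the square of the paper's `u`) and
`K t = ∫₀ᵗ e^{-2ωs} ds / ∫₀ᵀ e^{-2ωs} ds`. The hypothesis becomes `g' ≤ -2 √h₀ K' √g` wherever
`g > 0`, while `φ = h₀ (1 - K)²` satisfies `φ' = -2 √h₀ K' · √h₀ (1 - K) ≥ -2 √h₀ K' √φ`. So `φ`
is a supersolution starting at `g 0 = h₀` and vanishing at `T`, and comparison gives
`0 ≤ g T ≤ φ T = 0`. The comparison is run on `g` rather than on `√g`, which need not be
differentiable where `g` vanishes.
-/

open MeasureTheory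

open Set Real

theorem image_le_of_deriv_right_le_deriv_boundary_of_lt {f f' : ℝ → ℝ} {a b : ℝ}
    (hf : ContinuousOn f (Icc a b)) (hf' : ∀ x ∈ Ico a b, HasDerivWithinAt f (f' x) (Ici x) x)
    {B B' : ℝ → ℝ} (ha : f a ≤ B a) (hB : ContinuousOn B (Icc a b))
    (hB' : ∀ x ∈ Ico a b, HasDerivWithinAt B (B' x) (Ici x) x)
    (bound : ∀ x ∈ Ico a b, B x < f x → f' x ≤ B' x) : ∀ ⦃x⦄, x ∈ Icc a b → f x ≤ B x := by
  intro x hx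
  refine le_of_forall_pos_le_add fun ε hε => ?_
  -- The fence `B + ε e^{· - x}` lies strictly above `B`, so the strict fencing theorem applies.
  have hfence := image_le_of_deriv_right_lt_deriv_boundary' hf hf'
    (B := fun y => B y + ε * exp (y - x)) (B' := fun y => B' y + ε * exp (y - x))
    (by linarith [mul_pos hε (exp_pos (a - x))])
    (hB.add (by fun_prop))
    (fun y hy => (hB' y hy).add
      (by simpa using ((hasDerivWithinAt_id y _).sub_const x).exp.const_mul ε))
    (fun y hy hfy => by
      have hεy := mul_pos hε (exp_pos (y - x))
      linarith [bound y hy (by linarith)])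
    hx
  simpa using hfence

theorem le_zero_of_deriv_le_neg_mul_sqrt {g g' K k : ℝ → ℝ} {a b c : ℝ} (hab : a ≤ b)
    (hc : 0 ≤ c) (hg : ∀ t ∈ Icc a b, HasDerivAt g (g' t) t)
    (hK : ∀ t ∈ Icc a b, HasDerivAt K (k t) t) (hk : ∀ t ∈ Icc a b, 0 ≤ k t)
    (hga : g a = c ^ 2) (hKa : K a = 0) (hKb : K b = 1)
    (bound : ∀ t ∈ Icc a b, 0 < g t → g' t ≤ -2 * c * k t * √(g t)) : g b ≤ 0 := by
  have hφ : ∀ t ∈ Icc a b,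
      HasDerivAt (fun s => (c * (1 - K s)) ^ 2) (-2 * c * k t * (c * (1 - K t))) t :=
    fun t ht => ((((hK t ht).const_sub 1).const_mul c).fun_pow 2).congr_deriv
      (by push_cast; ring)
  have hsuper : ∀ t ∈ Ico a b, (c * (1 - K t)) ^ 2 < g t →
      g' t ≤ -2 * c * k t * (c * (1 - K t)) := by
    intro t ht hlt
    have ht' := Ico_subset_Icc_self ht
    have hsqrt : c * (1 - K t) ≤ √(g t) :=
      calc c * (1 - K t) ≤ |c * (1 - K t)| := le_abs_self _
        _ = √((c * (1 - K t)) ^ 2) := (sqrt_sq_eq_abs _).symm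
        _ ≤ √(g t) := sqrt_le_sqrt hlt.le
    have hck := mul_nonneg hc (hk t ht')
    calc g' t ≤ -2 * c * k t * √(g t) := bound t ht' ((sq_nonneg _).trans_lt hlt)
      _ ≤ -2 * c * k t * (c * (1 - K t)) := by nlinarith
  have hcomp := image_le_of_deriv_right_le_deriv_boundary_of_lt
    (fun t ht => (hg t ht).continuousAt.continuousWithinAt)
    (fun t ht => (hg t (Ico_subset_Icc_self ht)).hasDerivWithinAt)
    (by simp [hga, hKa]) (fun t ht => (hφ t ht).continuousAt.continuousWithinAt)
    (fun t ht => (hφ t (Ico_subset_Icc_self ht)).hasDerivWithinAt) hsuper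
    (right_mem_Icc.2 hab)
  simpa [hKb] using hcomp

theorem sub_mul_exp_le_of_le_sub_sqrt {ω t I c x x' : ℝ}
    (h : x' ≤ 2 * ω * x - 2 * (exp (-(ω * t)) / I) * c * √x) :
    (x' - 2 * ω * x) * exp (-(2 * ω * t)) ≤
      -2 * c * (exp (-(2 * ω * t)) / I) * √(x * exp (-(2 * ω * t))) := by
  have hexp : exp (-(2 * ω * t)) = exp (-(ω * t)) ^ 2 := by
    rw [← exp_nat_mul]; ring_nf
  rw [hexp, sqrt_mul' _ (sq_nonneg _), sqrt_sq (exp_pos _).le]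
  calc (x' - 2 * ω * x) * exp (-(ω * t)) ^ 2
      ≤ (-2 * (exp (-(ω * t)) / I) * c * √x) * exp (-(ω * t)) ^ 2 :=
        mul_le_mul_of_nonneg_right (by linarith) (sq_nonneg _)
    _ = _ := by ring

theorem coupling_succeeds_by_time_T_general (ω T h₀ : ℝ) (hT : 0 < T)
    (h h' : ℝ → ℝ) (hder : ∀ t ∈ Set.Icc (0:ℝ) T, HasDerivAt h (h' t) t)
    (hnn : ∀ t ∈ Set.Icc (0:ℝ) T, 0 ≤ h t) (h0 : h 0 = h₀)
    (hineq : ∀ t ∈ Set.Icc (0:ℝ) T, 0 < h t →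
      h' t ≤ 2 * ω * h t -
        2 * (Real.exp (-(ω * t)) / ∫ s in (0:ℝ)..T, Real.exp (-(2 * ω * s))) *
          Real.sqrt h₀ * Real.sqrt (h t)) :
    h T = 0 := by
  set I := ∫ s in (0:ℝ)..T, exp (-(2 * ω * s))
  have hcont : Continuous fun s => exp (-(2 * ω * s)) := by fun_prop
  have hI : 0 < I := intervalIntegral.intervalIntegral_pos_of_pos
    (hcont.intervalIntegrable 0 T) (fun _ => exp_pos _) hT
  have hK (t : ℝ) : HasDerivAt (fun t => (∫ s in (0:ℝ)..t, exp (-(2 * ω * s))) / I)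
      (exp (-(2 * ω * t)) / I) t :=
    (intervalIntegral.integral_hasDerivAt_right (hcont.intervalIntegrable 0 t)
      (hcont.stronglyMeasurableAtFilter _ _) hcont.continuousAt).div_const I
  have hg (t : ℝ) (ht : t ∈ Icc 0 T) : HasDerivAt (fun t => h t * exp (-(2 * ω * t)))
      ((h' t - 2 * ω * h t) * exp (-(2 * ω * t))) t :=
    ((hder t ht).mul ((hasDerivAt_id t).const_mul (2 * ω)).neg.exp).congr_deriv
      (by simp; ring)
  have hh₀ : 0 ≤ h₀ := h0 ▸ hnn 0 (left_mem_Icc.2 hT.le)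
  have hgT := le_zero_of_deriv_le_neg_mul_sqrt hT.le (sqrt_nonneg h₀) hg (fun t _ => hK t)
    (fun t _ => (div_pos (exp_pos _) hI).le) (by simp [h0, sq_sqrt hh₀]) (by simp)
    (div_self hI.ne')
    (fun t ht hpos => sub_mul_exp_le_of_le_sub_sqrt
      (hineq t ht (pos_of_mul_pos_left hpos (exp_pos _).le)))
  exact le_antisymm (nonpos_of_mul_nonpos_left hgT (exp_pos _)) (hnn T (right_mem_Icc.2 hT.le))

theorem coupling_succeeds_by_time_T (ω T h₀ : ℝ) (hT : 0 < T) (hh₀ : 0 < h₀)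
    (h h' : ℝ → ℝ) (hder : ∀ t ∈ Set.Icc (0:ℝ) T, HasDerivAt h (h' t) t)
    (hnn : ∀ t ∈ Set.Icc (0:ℝ) T, 0 ≤ h t) (h0 : h 0 = h₀)
    (hineq : ∀ t ∈ Set.Icc (0:ℝ) T, 0 < h t →
      h' t ≤ 2 * ω * h t -
        2 * (Real.exp (-(ω * t)) / ∫ s in (0:ℝ)..T, Real.exp (-(2 * ω * s))) *
          Real.sqrt h₀ * Real.sqrt (h t)) :
    h T = 0 :=
  coupling_succeeds_by_time_T_general ω T h₀ hT h h' hder hnn h0 hineq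
end
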